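/- Let f : (M,F) → (N,G) be a surjective boundedly bicontrolled map of X-filtered R-modules of filtration degree ≤ b. Suppose F is D-lean and d-insular, and the kernel of f with its standard filtration K(S) = ker(f) ∩ F(S) is D'-lean. Define a new filtration on N by Ĝ(S) = f(F(S[b])). Then G(S) ⊆ Ĝ(S) ⊆ G(S[2b]) for all S ⊆ X (so the identity of N is a bounded isomorphism between G and Ĝ), the map f : (M,F) → (N,Ĝ) is boundedly bicontrolled of filtration degree ≤ b, and Ĝ is (D + 2b)-lean and (4b + D' + d)-insular. -/

import Mathlib

open Set Metric

/-- The metric `D`-enlargement `S[D]` of a subset `S` of a metric space `X`. -/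
def enl {X : Type*} [MetricSpace X] (S : Set X) (D : ℝ) : Set X :=
  {x : X | ∃ s ∈ S, dist x s ≤ D}

/-- `F` is an `X`-filtration of the `R`-module `M`: a monotone assignment of submodules
with `F ∅ = 0` and `F X = M`. -/
def IsXFiltration {R X M : Type*} [Ring R] [MetricSpace X] [AddCommGroup M] [Module R M]
    (F : Set X → Submodule R M) : Prop :=
  Monotone F ∧ F (∅ : Set X) = ⊥ ∧ F Set.univ = ⊤

/-- `f` is boundedly controlled with bound `D`: `f(F₁(S)) ⊆ F₂(S[D])` for all `S`. -/
def BddCtrl {R X M₁ M₂ : Type*} [Ring R] [MetricSpace X]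
    [AddCommGroup M₁] [Module R M₁] [AddCommGroup M₂] [Module R M₂]
    (F₁ : Set X → Submodule R M₁) (F₂ : Set X → Submodule R M₂)
    (f : M₁ →ₗ[R] M₂) (D : ℝ) : Prop :=
  ∀ S : Set X, (F₁ S).map f ≤ F₂ (enl S D)

/-- `f` is boundedly bicontrolled of filtration degree `≤ D`: in addition to being
boundedly controlled with bound `D`, `range(f) ∩ F₂(S) ⊆ f(F₁(S[D]))` for all `S`. -/
def BddBictrl {R X M₁ M₂ : Type*} [Ring R] [MetricSpace X]
    [AddCommGroup M₁] [Module R M₁] [AddCommGroup M₂] [Module R M₂]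
    (F₁ : Set X → Submodule R M₁) (F₂ : Set X → Submodule R M₂)
    (f : M₁ →ₗ[R] M₂) (D : ℝ) : Prop :=
  BddCtrl F₁ F₂ f D ∧
    ∀ S : Set X, LinearMap.range f ⊓ F₂ S ≤ (F₁ (enl S D)).map f

/-- `(M, F)` is `D`-lean: `F(S)` is contained in the sum of the `F(B_D(x))` over `x ∈ S`. -/
def IsLean {R X M : Type*} [Ring R] [MetricSpace X] [AddCommGroup M] [Module R M]
    (F : Set X → Submodule R M) (D : ℝ) : Prop :=
  ∀ S : Set X, F S ≤ ⨆ x ∈ S, F (Metric.closedBall x D)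

/-- `(M, F)` is `d`-insular: `F(T) ∩ F(U) ⊆ F(T[d] ∩ U[d])` for all `T`, `U`. -/
def IsInsular {R X M : Type*} [Ring R] [MetricSpace X] [AddCommGroup M] [Module R M]
    (F : Set X → Submodule R M) (d : ℝ) : Prop :=
  ∀ T U : Set X, F T ⊓ F U ≤ F (enl T d ∩ enl U d)

lemma enl_mono_set {X : Type*} [MetricSpace X] {S T : Set X} (h : S ⊆ T) (D : ℝ) :
    enl S D ⊆ enl T D := fun _ ⟨s, hs, hd⟩ => ⟨s, h hs, hd⟩

lemma subset_enl {X : Type*} [MetricSpace X] (S : Set X) {D : ℝ} (hD : 0 ≤ D) :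
    S ⊆ enl S D := fun x hx => ⟨x, hx, by simpa using hD⟩

lemma enl_enl {X : Type*} [MetricSpace X] (S : Set X) (a c : ℝ) :
    enl (enl S a) c ⊆ enl S (c + a) := by
  rintro x ⟨y, ⟨s, hs, h1⟩, h2⟩
  exact ⟨s, hs, (dist_triangle x y s).trans (add_le_add h2 h1)⟩

lemma enl_mono_radius {X : Type*} [MetricSpace X] (S : Set X) {a c : ℝ} (h : a ≤ c) :
    enl S a ⊆ enl S c := fun _ ⟨s, hs, hd⟩ => ⟨s, hs, hd.trans h⟩

lemma closedBall_subset_enl {X : Type*} [MetricSpace X] {W : Set X} {x : X} (hx : x ∈ W)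
    (r : ℝ) : Metric.closedBall x r ⊆ enl W r := fun y hy => ⟨x, hx, hy⟩

/-- For a surjective boundedly bicontrolled `f : (M,F) → (N,G)` of degree `≤ b` with `F`
`D`-lean and `d`-insular and the kernel (with its standard filtration) `D'`-lean, the new
filtration `Ĝ(S) = f(F(S[b]))` on `N` satisfies `G(S) ⊆ Ĝ(S) ⊆ G(S[2b])`, the map
`f : (M,F) → (N,Ĝ)` is boundedly bicontrolled of degree `≤ b`, and `Ĝ` is `(D+2b)`-lean
and `(4b + D' + d)`-insular. -/
theorem quotient_filtration_lean_insular
    {R X M N : Type*} [Ring R] [MetricSpace X]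
    [AddCommGroup M] [Module R M] [AddCommGroup N] [Module R N]
    (F : Set X → Submodule R M) (G : Set X → Submodule R N)
    (hF : IsXFiltration F) (hG : IsXFiltration G)
    (f : M →ₗ[R] N) (b D d D' : ℝ)
    (hb : 0 ≤ b) (hD : 0 ≤ D) (hd : 0 ≤ d) (hD' : 0 ≤ D')
    (hf : BddBictrl F G f b) (hfs : Function.Surjective f)
    (hlean : IsLean F D) (hins : IsInsular F d)
    (hK : IsLean (fun S => (LinearMap.ker f ⊓ F S).comap (LinearMap.ker f).subtype) D') :
    (∀ S : Set X, G S ≤ (F (enl S b)).map f) ∧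
    (∀ S : Set X, (F (enl S b)).map f ≤ G (enl S (2*b))) ∧
    BddBictrl F (fun S => (F (enl S b)).map f) f b ∧
    IsLean (fun S => (F (enl S b)).map f) (D + 2*b) ∧
    IsInsular (fun S => (F (enl S b)).map f) (4*b + D' + d) := by
  obtain ⟨hFmono, -, -⟩ := hF
  obtain ⟨hGmono, -, -⟩ := hG
  obtain ⟨hfc, hfb⟩ := hf
  refine ⟨?_, ?_, ⟨?_, ?_⟩, ?_, ?_⟩
  · -- G S ≤ Ĝ S
    intro S
    refine le_trans ?_ (hfb S)
    intro x hx
    exact Submodule.mem_inf.mpr ⟨LinearMap.mem_range.mpr (hfs x), hx⟩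
  · -- Ĝ S ≤ G (S[2b])
    intro S
    refine (hfc (enl S b)).trans (hGmono ?_)
    rw [two_mul]
    exact enl_enl S b b
  · -- control
    intro S
    exact Submodule.map_mono (hFmono ((subset_enl S hb).trans (subset_enl _ hb)))
  · -- bicontrol
    intro S
    exact inf_le_right
  · -- leanness
    intro S
    calc (F (enl S b)).map f ≤ (⨆ x ∈ enl S b, F (Metric.closedBall x D)).map f :=
          Submodule.map_mono (hlean _)
      _ = ⨆ x ∈ enl S b, (F (Metric.closedBall x D)).map f := by
          simp_rw [Submodule.map_iSup]
      _ ≤ ⨆ y ∈ S, (F (enl (Metric.closedBall y (D + 2*b)) b)).map f := by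
          refine iSup₂_le fun x hx => ?_
          obtain ⟨y, hy, hxy⟩ := hx
          refine le_trans ?_ (le_iSup₂ y hy)
          refine Submodule.map_mono (hFmono ?_)
          intro z hz
          refine subset_enl _ hb ?_
          simp only [Metric.mem_closedBall] at hz ⊢
          calc dist z y ≤ dist z x + dist x y := dist_triangle _ _ _
            _ ≤ D + 2*b := by linarith
  · -- insularity
    intro T U z hz
    obtain ⟨hzT, hzU⟩ := Submodule.mem_inf.mp hz
    obtain ⟨u, hu, hfu⟩ := hzT
    obtain ⟨v, hv, hfv⟩ := hzU
    have hk : u - v ∈ LinearMap.ker f := by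
      simp [LinearMap.mem_ker, map_sub, hfu, hfv]
    have hkF : u - v ∈ F (enl T b ∪ enl U b) :=
      Submodule.sub_mem _ (hFmono Set.subset_union_left hu)
        (hFmono Set.subset_union_right hv)
    have hmem : (⟨u - v, hk⟩ : LinearMap.ker f) ∈
        ⨆ x ∈ (enl T b ∪ enl U b),
          (LinearMap.ker f ⊓ F (Metric.closedBall x D')).comap (LinearMap.ker f).subtype :=
      hK _ (Submodule.mem_comap.mpr (Submodule.mem_inf.mpr ⟨hk, hkF⟩))
    have hAB : u - v ∈ (LinearMap.ker f ⊓ F (enl (enl T b) D')) ⊔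
        (LinearMap.ker f ⊓ F (enl (enl U b) D')) := by
      have h1 : (⨆ x ∈ (enl T b ∪ enl U b),
          (LinearMap.ker f ⊓ F (Metric.closedBall x D')).comap (LinearMap.ker f).subtype) ≤
          ((LinearMap.ker f ⊓ F (enl (enl T b) D')) ⊔
            (LinearMap.ker f ⊓ F (enl (enl U b) D'))).comap (LinearMap.ker f).subtype := by
        refine iSup₂_le fun x hx => ?_
        rcases hx with h | h
        · exact (Submodule.comap_mono (le_sup_of_le_left
            (inf_le_inf le_rfl (hFmono (closedBall_subset_enl h D')))))
        · exact (Submodule.comap_mono (le_sup_of_le_right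
            (inf_le_inf le_rfl (hFmono (closedBall_subset_enl h D')))))
      exact Submodule.mem_comap.mp (h1 hmem)
    obtain ⟨a, ha, c, hc, hac⟩ := Submodule.mem_sup.mp hAB
    have hu' : u = a + c + v := sub_eq_iff_eq_add.mp hac.symm
    have hw2 : u - a = v + c := by rw [hu']; abel
    have hfw : f (u - a) = z := by
      have ha0 : f a = 0 := (Submodule.mem_inf.mp ha).1
      simp [map_sub, ha0, hfu]
    have hwT : u - a ∈ F (enl T (b + D')) :=
      Submodule.sub_mem _ (hFmono (enl_mono_radius T (by linarith)) hu)
        (hFmono ((enl_enl T b D').trans (enl_mono_radius T (by linarith)))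
          (Submodule.mem_inf.mp ha).2)
    have hwU : u - a ∈ F (enl U (b + D')) := by
      rw [hw2]
      exact Submodule.add_mem _ (hFmono (enl_mono_radius U (by linarith)) hv)
        (hFmono ((enl_enl U b D').trans (enl_mono_radius U (by linarith)))
          (Submodule.mem_inf.mp hc).2)
    have hwI := hins _ _ (Submodule.mem_inf.mpr ⟨hwT, hwU⟩)
    have hsub : enl (enl T (b + D')) d ∩ enl (enl U (b + D')) d ⊆
        enl (enl T (4*b + D' + d) ∩ enl U (4*b + D' + d)) b := by
      rintro x ⟨h1, h2⟩
      refine subset_enl _ hb ⟨?_, ?_⟩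
      · exact enl_mono_radius T (by linarith) (enl_enl T (b + D') d h1)
      · exact enl_mono_radius U (by linarith) (enl_enl U (b + D') d h2)
    exact ⟨u - a, hFmono hsub hwI, hfw⟩
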